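/- arXiv:1604.00167 — 2 statements merged into one kernel-verified Lean document; each statement's English description precedes it below -/
import Mathlib

section
/- Let β > 0 and ν > 0 be real numbers, n ∈ ℝ^m a vector, and let (α_k)_{k=1}^{K} be strictly positive reals and (a_k)_{k=1}^{K} vectors in ℝ^m. Then the single-reaction enzyme cost function q(s) = β · (1 - ν·exp(-⟨n, s⟩))^{-1} · ∑_{k=1}^{K} α_k·exp(⟨a_k, s⟩) is convex on the convex set {s ∈ ℝ^m : ν·exp(-⟨n, s⟩) < 1}. -/
open Real Finset Filter

/-- exp of a linear functional is convex. -/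
lemma convexOn_exp_linear {m : ℕ} (c : Fin m → ℝ) :
    ConvexOn ℝ Set.univ (fun s : Fin m → ℝ => Real.exp (∑ i, c i * s i)) := by
  refine ⟨convex_univ, fun x _ y _ p q hp hq hpq => ?_⟩
  have h : ∑ i, c i * (p * x i + q * y i)
      = p * ∑ i, c i * x i + q * ∑ i, c i * y i := by
    rw [Finset.mul_sum, Finset.mul_sum, ← Finset.sum_add_distrib]
    apply Finset.sum_congr rfl
    intro i _
    ring
  have h2 := convexOn_exp.2 (Set.mem_univ (∑ i, c i * x i)) (Set.mem_univ (∑ i, c i * y i))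
    hp hq hpq
  simp only [Pi.add_apply, Pi.smul_apply, smul_eq_mul]
  rw [h]
  simpa [smul_eq_mul] using h2

/-- A finite sum of convex functions is convex. -/
lemma convexOn_finset_sum {m : ℕ} {S : Set (Fin m → ℝ)} (hS : Convex ℝ S)
    {ι : Type*} (t : Finset ι) {f : ι → (Fin m → ℝ) → ℝ}
    (hf : ∀ j ∈ t, ConvexOn ℝ S (f j)) :
    ConvexOn ℝ S (fun x => ∑ j ∈ t, f j x) := by
  classical
  induction t using Finset.induction_on with
  | empty => simpa using convexOn_const (0 : ℝ) hS
  | @insert j t' hj ih =>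
    simp only [Finset.sum_insert hj]
    exact (hf j (Finset.mem_insert_self _ _)).add
      (ih fun i hi => hf i (Finset.mem_insert_of_mem hi))

/-- A pointwise limit of convex functions is convex. -/
lemma convexOn_of_tendsto {m : ℕ} {S : Set (Fin m → ℝ)} (hS : Convex ℝ S)
    {f : ℕ → (Fin m → ℝ) → ℝ} {g : (Fin m → ℝ) → ℝ}
    (hf : ∀ N, ConvexOn ℝ S (f N))
    (hlim : ∀ x ∈ S, Tendsto (fun N => f N x) atTop (nhds (g x))) :
    ConvexOn ℝ S g := by
  refine ⟨hS, fun x hx y hy p q hp hq hpq => ?_⟩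
  have hmem := hS hx hy hp hq hpq
  refine le_of_tendsto_of_tendsto (hlim _ hmem)
    (((hlim x hx).const_mul p).add ((hlim y hy).const_mul q)) ?_
  filter_upwards with N
  simpa [smul_eq_mul] using (hf N).2 hx hy hp hq hpq

/-- Single-reaction enzyme cost function
`q(s) = β * (1 - ν * exp (-⟨n, s⟩))⁻¹ * ∑ k, α k * exp ⟨a k, s⟩`
is convex on the convex set `{s : ν * exp (-⟨n, s⟩) < 1}`. -/
theorem singleReaction_enzymeCost_convexOn (m K : ℕ) (β ν : ℝ) (hβ : 0 < β) (hν : 0 < ν)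
    (n : Fin m → ℝ) (α : Fin K → ℝ) (hα : ∀ k, 0 < α k) (a : Fin K → Fin m → ℝ) :
    ConvexOn ℝ {s : Fin m → ℝ | ν * Real.exp (-(∑ i, n i * s i)) < 1}
      (fun s : Fin m → ℝ =>
        β * (1 - ν * Real.exp (-(∑ i, n i * s i)))⁻¹ *
          ∑ k : Fin K, α k * Real.exp (∑ i, a k i * s i)) := by
  set S : Set (Fin m → ℝ) := {s : Fin m → ℝ | ν * Real.exp (-(∑ i, n i * s i)) < 1} with hSdef
  -- convexity of S
  have hφ : ConvexOn ℝ Set.univ (fun s : Fin m → ℝ => ν * Real.exp (-(∑ i, n i * s i))) := by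
    have h := (convexOn_exp_linear (fun i => -n i)).smul hν.le
    have heq : ∀ s : Fin m → ℝ, (∑ i, (-n i) * s i) = -(∑ i, n i * s i) := by
      intro s; rw [← Finset.sum_neg_distrib]; apply Finset.sum_congr rfl; intros; ring
    simpa [heq, smul_eq_mul] using h
  have hSconv : Convex ℝ S := by
    have := hφ.convex_lt 1
    simpa [hSdef, Set.sep_univ] using this
  -- partial-sum approximants
  set f : ℕ → (Fin m → ℝ) → ℝ := fun N s =>
    ∑ j ∈ Finset.range N, ∑ k : Fin K,
      (β * α k * ν ^ j) * Real.exp (∑ i, (a k i - (j : ℝ) * n i) * s i) with hfdef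
  have hfconv : ∀ N, ConvexOn ℝ S (f N) := by
    intro N
    apply convexOn_finset_sum hSconv
    intro j _
    apply convexOn_finset_sum hSconv
    intro k _
    have hc : 0 ≤ β * α k * ν ^ j :=
      mul_nonneg (mul_nonneg hβ.le (hα k).le) (pow_nonneg hν.le j)
    have := ((convexOn_exp_linear (fun i => a k i - (j : ℝ) * n i)).smul hc).subset
      (Set.subset_univ S) hSconv
    simpa [smul_eq_mul] using this
  refine convexOn_of_tendsto hSconv hfconv ?_
  intro s hs
  set B := ∑ i, n i * s i with hB
  set r := ν * Real.exp (-B) with hr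
  have hr0 : 0 ≤ r := mul_nonneg hν.le (Real.exp_nonneg _)
  have hr1 : r < 1 := hs
  set C := β * ∑ k : Fin K, α k * Real.exp (∑ i, a k i * s i) with hC
  have hfN : ∀ N, f N s = (∑ j ∈ Finset.range N, r ^ j) * C := by
    intro N
    rw [hfdef, Finset.sum_mul]
    apply Finset.sum_congr rfl
    intro j _
    rw [hC, Finset.mul_sum, Finset.mul_sum]
    apply Finset.sum_congr rfl
    intro k _
    have hsum : ∑ i, (a k i - (j : ℝ) * n i) * s i
        = (∑ i, a k i * s i) - (j : ℝ) * B := by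
      rw [hB, Finset.mul_sum, ← Finset.sum_sub_distrib]
      apply Finset.sum_congr rfl; intros; ring
    rw [hsum, Real.exp_sub, hr]
    have hpow : Real.exp ((j : ℝ) * B) = (Real.exp B) ^ j := by
      rw [← Real.exp_nat_mul]
    rw [hpow]
    have hinv : (Real.exp B) ^ j = (Real.exp (-B))⁻¹ ^ j := by
      rw [Real.exp_neg, inv_inv]
    rw [hinv, div_eq_mul_inv, ← inv_pow, inv_inv]
    rw [mul_pow]
    ring
  have hgeo : Tendsto (fun N => ∑ j ∈ Finset.range N, r ^ j) atTop (nhds (1 - r)⁻¹) :=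
    (hasSum_geometric_of_lt_one hr0 hr1).tendsto_sum_nat
  have := hgeo.mul_const C
  have hgoal : (1 - r)⁻¹ * C
      = β * (1 - ν * Real.exp (-(∑ i, n i * s i)))⁻¹ *
          ∑ k : Fin K, α k * Real.exp (∑ i, a k i * s i) := by
    rw [hC, hr, hB]; ring
  rw [← hgoal]
  simpa [hfN] using this
end

section
/- Let L be a finite index set. For each l ∈ L let β_l > 0 and ν_l > 0 be reals, n_l ∈ ℝ^m a vector, and let (α_{l,k})_k be strictly positive reals and (a_{l,k})_k vectors in ℝ^m. Then the total enzyme cost q(s) = ∑_{l ∈ L} β_l · (1 - ν_l·exp(-⟨n_l, s⟩))^{-1} · ∑_k α_{l,k}·exp(⟨a_{l,k}, s⟩) is convex on the convex set {s ∈ ℝ^m : ∀ l ∈ L, ν_l·exp(-⟨n_l, s⟩) < 1}. -/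
open Real

/-- Summand representation. -/
lemma enzyme_repr (c : ℝ) (v w : ℝ) (j : ℕ) :
    c ^ j * Real.exp (v - j * w) = Real.exp v * (c * Real.exp (-w)) ^ j := by
  have h : v - (j : ℝ) * w = v + (j : ℝ) * (-w) := by ring
  rw [h, Real.exp_add, mul_pow, ← Real.exp_nat_mul]
  ring

/-- Summability of the geometric-type series. -/
lemma enzyme_summable {c w : ℝ} (hc : 0 < c) (hw : c * Real.exp (-w) < 1) (v : ℝ) :
    Summable (fun j : ℕ => c ^ j * Real.exp (v - j * w)) := by
  have hr : 0 ≤ c * Real.exp (-w) := le_of_lt (mul_pos hc (Real.exp_pos _))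
  have : Summable (fun j : ℕ => Real.exp v * (c * Real.exp (-w)) ^ j) :=
    (summable_geometric_of_lt_one hr hw).mul_left _
  exact this.congr fun j => (enzyme_repr c v w j).symm

/-- Geometric series representation of the thermodynamic factor. -/
lemma enzyme_geom {c w : ℝ} (hc : 0 < c) (hw : c * Real.exp (-w) < 1) (v : ℝ) :
    Real.exp v * (1 - c * Real.exp (-w))⁻¹ = ∑' j : ℕ, c ^ j * Real.exp (v - j * w) := by
  have hr : 0 ≤ c * Real.exp (-w) := le_of_lt (mul_pos hc (Real.exp_pos _))
  calc Real.exp v * (1 - c * Real.exp (-w))⁻¹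
      = Real.exp v * ∑' j : ℕ, (c * Real.exp (-w)) ^ j := by
        rw [tsum_geometric_of_lt_one hr hw]
    _ = ∑' j : ℕ, Real.exp v * (c * Real.exp (-w)) ^ j := (tsum_mul_left).symm
    _ = ∑' j : ℕ, c ^ j * Real.exp (v - j * w) :=
        tsum_congr fun j => (enzyme_repr c v w j).symm

/-- Linearity of `s ↦ ∑ i, b i * s i` applied to a convex combination. -/
lemma lin_comb {m : ℕ} (b x y : Fin m → ℝ) (t1 t2 : ℝ) :
    (∑ i, b i * (t1 • x + t2 • y) i) = t1 * (∑ i, b i * x i) + t2 * (∑ i, b i * y i) := by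
  simp only [Pi.add_apply, Pi.smul_apply, smul_eq_mul, Finset.mul_sum]
  rw [← Finset.sum_add_distrib]
  exact Finset.sum_congr rfl fun i _ => by ring

/-- Rewriting of the membership condition as a half-space condition. -/
lemma enzyme_mem_iff {c : ℝ} (hc : 0 < c) (w : ℝ) :
    c * Real.exp (-w) < 1 ↔ Real.log c < w := by
  rw [Real.exp_neg, Real.log_lt_iff_lt_exp hc, ← div_eq_mul_inv,
    div_lt_one (Real.exp_pos w)]

/-- The half-space is convex. -/
lemma enzyme_halfspace_convex {m : ℕ} {c : ℝ} (hc : 0 < c) (n : Fin m → ℝ) :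
    Convex ℝ {s : Fin m → ℝ | c * Real.exp (-(∑ i, n i * s i)) < 1} := by
  have hset : {s : Fin m → ℝ | c * Real.exp (-(∑ i, n i * s i)) < 1}
      = {s : Fin m → ℝ | Real.log c < ∑ i, n i * s i} := by
    ext s; exact enzyme_mem_iff hc _
  rw [hset]
  refine convex_halfSpace_gt ?_ _
  constructor
  · intro x y
    simp only [Pi.add_apply, Finset.mul_sum, ← Finset.sum_add_distrib]
    exact Finset.sum_congr rfl fun i _ => by ring
  · intro r x
    simp only [Pi.smul_apply, smul_eq_mul, Finset.mul_sum]
    exact Finset.sum_congr rfl fun i _ => by ring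

/-- The single-summand function is convex on the corresponding half-space. -/
lemma single_convexOn {m : ℕ} {c : ℝ} (hc : 0 < c) (a n : Fin m → ℝ) :
    ConvexOn ℝ {s : Fin m → ℝ | c * Real.exp (-(∑ i, n i * s i)) < 1}
      (fun s => Real.exp (∑ i, a i * s i) * (1 - c * Real.exp (-(∑ i, n i * s i)))⁻¹) := by
  set S := {s : Fin m → ℝ | c * Real.exp (-(∑ i, n i * s i)) < 1} with hS
  have hconv : Convex ℝ S := enzyme_halfspace_convex hc n
  refine ⟨hconv, ?_⟩
  intro x hx y hy t1 t2 ht1 ht2 hsum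
  set z := t1 • x + t2 • y with hz
  have hzS : z ∈ S := hconv hx hy ht1 ht2 hsum
  -- notations
  set V : (Fin m → ℝ) → ℝ := fun s => ∑ i, a i * s i with hV
  set W : (Fin m → ℝ) → ℝ := fun s => ∑ i, n i * s i with hW
  have hVz : V z = t1 * V x + t2 * V y := lin_comb a x y t1 t2
  have hWz : W z = t1 * W x + t2 * W y := lin_comb n x y t1 t2
  have hxS : c * Real.exp (-(W x)) < 1 := hx
  have hyS : c * Real.exp (-(W y)) < 1 := hy
  have hzS' : c * Real.exp (-(W z)) < 1 := hzS
  -- geometric representations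
  have hgx := enzyme_geom hc hxS (V x)
  have hgy := enzyme_geom hc hyS (V y)
  have hgz := enzyme_geom hc hzS' (V z)
  have hsx := enzyme_summable hc hxS (V x)
  have hsy := enzyme_summable hc hyS (V y)
  have hsz := enzyme_summable hc hzS' (V z)
  simp only [smul_eq_mul]
  show Real.exp (V z) * (1 - c * Real.exp (-(W z)))⁻¹ ≤
    t1 * (Real.exp (V x) * (1 - c * Real.exp (-(W x)))⁻¹) +
    t2 * (Real.exp (V y) * (1 - c * Real.exp (-(W y)))⁻¹)
  rw [hgx, hgy, hgz]
  have key : ∀ j : ℕ, c ^ j * Real.exp (V z - j * W z) ≤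
      t1 * (c ^ j * Real.exp (V x - j * W x)) + t2 * (c ^ j * Real.exp (V y - j * W y)) := by
    intro j
    have haff : V z - (j:ℝ) * W z
        = t1 * (V x - j * W x) + t2 * (V y - j * W y) := by
      rw [hVz, hWz]; ring
    have hexp : Real.exp (V z - j * W z)
        ≤ t1 * Real.exp (V x - j * W x) + t2 * Real.exp (V y - j * W y) := by
      rw [haff]
      have := convexOn_exp.2 (Set.mem_univ (V x - j * W x)) (Set.mem_univ (V y - j * W y))
        ht1 ht2 hsum
      simpa using this
    have hcj : (0:ℝ) ≤ c ^ j := le_of_lt (pow_pos hc j)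
    nlinarith [mul_le_mul_of_nonneg_left hexp hcj]
  calc (∑' j : ℕ, c ^ j * Real.exp (V z - j * W z))
      ≤ ∑' j : ℕ, (t1 * (c ^ j * Real.exp (V x - j * W x))
          + t2 * (c ^ j * Real.exp (V y - j * W y))) :=
        Summable.tsum_le_tsum key hsz ((hsx.mul_left t1).add (hsy.mul_left t2))
    _ = t1 * (∑' j : ℕ, c ^ j * Real.exp (V x - j * W x))
          + t2 * (∑' j : ℕ, c ^ j * Real.exp (V y - j * W y)) := by
        rw [Summable.tsum_add (hsx.mul_left t1) (hsy.mul_left t2), tsum_mul_left, tsum_mul_left]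

/-- The total enzyme cost
`q(s) = ∑ l, β l * (1 - ν l * exp (-⟨n l, s⟩))⁻¹ * ∑ k, α l k * exp ⟨a l k, s⟩`
is convex on the convex set `{s : ∀ l, ν l * exp (-⟨n l, s⟩) < 1}`. -/
theorem totalEnzymeCost_convexOn (L : Type*) [Fintype L] (m : ℕ)
    (K : L → ℕ) (β ν : L → ℝ) (hβ : ∀ l, 0 < β l) (hν : ∀ l, 0 < ν l)
    (n : L → Fin m → ℝ) (α : (l : L) → Fin (K l) → ℝ) (hα : ∀ l k, 0 < α l k)
    (a : (l : L) → Fin (K l) → Fin m → ℝ) :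
    ConvexOn ℝ {s : Fin m → ℝ | ∀ l : L, ν l * Real.exp (-(∑ i, n l i * s i)) < 1}
      (fun s : Fin m → ℝ =>
        ∑ l : L, β l * (1 - ν l * Real.exp (-(∑ i, n l i * s i)))⁻¹ *
          ∑ k : Fin (K l), α l k * Real.exp (∑ i, a l k i * s i)) := by
  set S := {s : Fin m → ℝ | ∀ l : L, ν l * Real.exp (-(∑ i, n l i * s i)) < 1} with hS
  have hSsub : ∀ l : L, S ⊆ {s : Fin m → ℝ | ν l * Real.exp (-(∑ i, n l i * s i)) < 1} :=
    fun l s hs => hs l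
  have hSconv : Convex ℝ S := by
    have : S = ⋂ l : L, {s : Fin m → ℝ | ν l * Real.exp (-(∑ i, n l i * s i)) < 1} := by
      ext s; simp [hS]
    rw [this]
    exact convex_iInter fun l => enzyme_halfspace_convex (hν l) (n l)
  -- rewrite the function as a double sum of single terms
  have hfun : (fun s : Fin m → ℝ =>
        ∑ l : L, β l * (1 - ν l * Real.exp (-(∑ i, n l i * s i)))⁻¹ *
          ∑ k : Fin (K l), α l k * Real.exp (∑ i, a l k i * s i))
      = (fun s : Fin m → ℝ =>
        ∑ l : L, ∑ k : Fin (K l), (β l * α l k) •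
          (Real.exp (∑ i, a l k i * s i) *
            (1 - ν l * Real.exp (-(∑ i, n l i * s i)))⁻¹)) := by
    funext s
    refine Finset.sum_congr rfl fun l _ => ?_
    rw [Finset.mul_sum]
    refine Finset.sum_congr rfl fun k _ => ?_
    simp only [smul_eq_mul]
    ring
  rw [hfun]
  -- sum of convex functions
  have hterm : ∀ (l : L) (k : Fin (K l)), ConvexOn ℝ S
      (fun s : Fin m → ℝ => (β l * α l k) •
        (Real.exp (∑ i, a l k i * s i) *
          (1 - ν l * Real.exp (-(∑ i, n l i * s i)))⁻¹)) := by
    intro l k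
    exact ConvexOn.smul (le_of_lt (mul_pos (hβ l) (hα l k)))
      ((single_convexOn (hν l) (a l k) (n l)).subset (hSsub l) hSconv)
  have hinner : ∀ l : L, ConvexOn ℝ S
      (fun s : Fin m → ℝ => ∑ k : Fin (K l), (β l * α l k) •
        (Real.exp (∑ i, a l k i * s i) *
          (1 - ν l * Real.exp (-(∑ i, n l i * s i)))⁻¹)) := by
    intro l
    classical
    induction (Finset.univ : Finset (Fin (K l))) using Finset.induction_on with
    | empty => simpa using convexOn_const (0:ℝ) hSconv
    | insert _ _ hnotmem ih =>
      simp only [Finset.sum_insert hnotmem]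
      exact (hterm l _).add ih
  classical
  induction (Finset.univ : Finset L) using Finset.induction_on with
  | empty => simpa using convexOn_const (0:ℝ) hSconv
  | insert _ _ hnotmem ih =>
    simp only [Finset.sum_insert hnotmem]
    exact (hinner _).add ih
end
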